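/- For n ≥ 0, r ≥ 2, k ≥ 1, and n - k = mr + d with 0 < d < r, the number of permutations of {1,...,n} in which the cycle containing 1 has length k and all other cycles have length not divisible by r equals (n-1)! · (r-1)(2r-1)⋯(mr-1) / (r^m · m!). -/

import Mathlib

/-- Permutations in which the cycle containing `x` has length `k` and every
other cycle has length not divisible by `r`. -/
def QProp (r k : ℕ) {α : Type*} (x : α) (σ : Equiv.Perm α) : Prop :=
  Function.minimalPeriod ⇑σ x = k ∧
    ∀ y : α, (∀ i : ℕ, (σ ^ i) x ≠ y) → ¬ r ∣ Function.minimalPeriod ⇑σ y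

/-!
Deleting the point `0` (Mathlib's `decomposeFin`) turns a permutation of `n` points whose cycle
through `0` has length `k ≥ 2` into a permutation of the other `n - 1` points whose cycle through
`σ 0` has length `k - 1`, and leaves all other cycles alone. Hence `|Q_k(n)| = (n-1) |Q_{k-1}(n-1)|`
and `|Q_1(n)| = D(n-1)`, where `D(n)` counts the permutations of `n` points with no cycle length
divisible by `r`; so `|Q_k(n)| (n-k)! = (n-1)! D(n-k)`. Sorting the permutations counted by `D(n)`
by the length of the cycle through `0` gives `D(n) = ∑_{k ≤ n, r ∤ k} |Q_k(n)|`, and these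
recurrences force `D(n) = n! w(⌊n/r⌋)` with `w(m) = ∏_{j ≤ m} (jr - 1)/(jr)`: the induction step is
`∑_{1 ≤ k ≤ N, r ∤ k} w(⌊(N-k)/r⌋) = N w(⌊N/r⌋)`, which follows from
`(r - 1) ∑_{i < m} w(i) = m r w(m)`.
-/

open Equiv Equiv.Perm Function Finset
open scoped Nat

namespace Equiv.Perm

variable {α : Type*}

lemma minimalPeriod_pos [Finite α] (σ : Perm α) (x : α) : 0 < minimalPeriod σ x :=
  minimalPeriod_pos_of_mem_periodicPts (σ.injective.mem_periodicPts x)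

lemma minimalPeriod_conj (g σ : Perm α) (x : α) :
    minimalPeriod ⇑(g * σ * g⁻¹) (g x) = minimalPeriod σ x := by
  refine minimalPeriod_eq_minimalPeriod_iff.2 fun n => ?_
  rw [IsPeriodicPt, IsPeriodicPt, IsFixedPt, IsFixedPt, iterate_eq_pow, iterate_eq_pow, conj_pow]
  simp

lemma forall_pow_apply_ne_iff [Finite α] {σ : Perm α} {x y : α} :
    (∀ i : ℕ, (σ ^ i) x ≠ y) ↔ ¬ σ.SameCycle x y := by
  refine ⟨fun h hxy => ?_, fun h i hi => h ⟨i, by simpa using hi⟩⟩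
  obtain ⟨i, hi⟩ := hxy.exists_nat_pow_eq
  exact h i hi

lemma SameCycle.minimalPeriod_eq [Finite α] {σ : Perm α} {x y : α} (h : σ.SameCycle x y) :
    minimalPeriod σ y = minimalPeriod σ x := by
  obtain ⟨i, rfl⟩ := h.exists_nat_pow_eq
  rw [← iterate_eq_pow, minimalPeriod_apply_iterate (σ.injective.mem_periodicPts x)]

variable {n : ℕ} (τ : Perm (Fin n))

lemma decomposeFin_symm_pow_apply_succ {p : Fin (n + 1)} {y : Fin n}
    (hy : ∀ i, ((τ ^ i) y).succ ≠ p) (i : ℕ) :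
    (decomposeFin.symm (p, τ) ^ i) y.succ = ((τ ^ i) y).succ := by
  induction i with
  | zero => rfl
  | succ i ih =>
    rw [pow_succ', mul_apply, ih, decomposeFin_symm_apply_succ, ← mul_apply, ← pow_succ']
    exact swap_apply_of_ne_of_ne (Fin.succ_ne_zero _) (hy (i + 1))

lemma minimalPeriod_decomposeFin_symm_succ {p : Fin (n + 1)} {y : Fin n}
    (hy : ∀ i, ((τ ^ i) y).succ ≠ p) :
    minimalPeriod (decomposeFin.symm (p, τ)) y.succ = minimalPeriod τ y := by
  refine minimalPeriod_eq_minimalPeriod_iff.2 fun i => ?_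
  simp only [IsPeriodicPt, IsFixedPt, iterate_eq_pow, decomposeFin_symm_pow_apply_succ τ hy,
    Fin.succ_inj]

/-- In `decomposeFin.symm (q.succ, τ)` the point `0` is inserted into the cycle of `q`,
just before `q`. -/
lemma decomposeFin_symm_pow_succ_apply_zero (q : Fin n) {i : ℕ} (hi : i < minimalPeriod τ q) :
    (decomposeFin.symm (q.succ, τ) ^ (i + 1)) 0 = ((τ ^ i) q).succ := by
  induction i with
  | zero => simp [decomposeFin_symm_apply_zero]
  | succ i ih =>
    rw [pow_succ', mul_apply, ih (by omega), decomposeFin_symm_apply_succ, ← mul_apply,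
      ← pow_succ']
    refine swap_apply_of_ne_of_ne (Fin.succ_ne_zero _) fun h => ?_
    have hper : IsPeriodicPt τ (i + 1) q := by
      rw [IsPeriodicPt, IsFixedPt, iterate_eq_pow]
      exact Fin.succ_injective _ h
    exact absurd (hper.minimalPeriod_le i.succ_pos) (by omega)

lemma minimalPeriod_decomposeFin_symm_zero (q : Fin n) :
    minimalPeriod (decomposeFin.symm (q.succ, τ)) 0 = minimalPeriod τ q + 1 := by
  set σ := decomposeFin.symm (q.succ, τ)
  set L := minimalPeriod τ q
  obtain ⟨l, hl⟩ : ∃ l, L = l + 1 := Nat.exists_eq_add_one.2 (minimalPeriod_pos τ q)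
  have hL : IsPeriodicPt σ (L + 1) 0 := by
    rw [IsPeriodicPt, IsFixedPt, iterate_eq_pow, pow_succ', mul_apply, hl,
      decomposeFin_symm_pow_succ_apply_zero τ q (by omega), decomposeFin_symm_apply_succ,
      ← mul_apply, ← pow_succ', ← hl, ← iterate_eq_pow, iterate_minimalPeriod, swap_apply_right]
  refine le_antisymm (hL.minimalPeriod_le L.succ_pos) (not_lt.1 fun hlt => ?_)
  obtain ⟨j, hj⟩ := Nat.exists_eq_add_one.2 (minimalPeriod_pos σ 0)
  have h0 := iterate_minimalPeriod (f := σ) (x := 0)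
  rw [hj, iterate_eq_pow, decomposeFin_symm_pow_succ_apply_zero τ q (by omega)] at h0
  exact Fin.succ_ne_zero _ h0

lemma sameCycle_decomposeFin_symm_zero_succ_iff {q y : Fin n} :
    (decomposeFin.symm (q.succ, τ)).SameCycle 0 y.succ ↔ τ.SameCycle q y := by
  constructor
  · intro h
    by_contra hqy
    have hy : ∀ i, ((τ ^ i) y).succ ≠ q.succ := fun i hi =>
      hqy (SameCycle.symm ⟨i, by simpa using Fin.succ_injective _ hi⟩)
    obtain ⟨i, hi⟩ := h.symm.exists_nat_pow_eq
    rw [decomposeFin_symm_pow_apply_succ τ hy] at hi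
    exact Fin.succ_ne_zero _ hi
  · intro h
    obtain ⟨i, rfl⟩ := h.exists_nat_pow_eq
    refine ⟨(i % minimalPeriod τ q + 1 : ℕ), ?_⟩
    rw [zpow_natCast, decomposeFin_symm_pow_succ_apply_zero τ q
      (Nat.mod_lt _ (minimalPeriod_pos τ q)), ← iterate_eq_pow, ← iterate_eq_pow,
      iterate_mod_minimalPeriod_eq]

end Equiv.Perm

section QProp

variable {α : Type*} {r k : ℕ}

lemma qProp_iff_sameCycle [Finite α] {x : α} {σ : Perm α} :
    QProp r k x σ ↔
      minimalPeriod σ x = k ∧ ∀ y, ¬ σ.SameCycle x y → ¬ r ∣ minimalPeriod σ y := by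
  simp only [QProp, forall_pow_apply_ne_iff]

lemma qProp_iff_of_not_dvd [Finite α] {x : α} {σ : Perm α} (hk : ¬ r ∣ k) :
    QProp r k x σ ↔ (∀ y, ¬ r ∣ minimalPeriod σ y) ∧ minimalPeriod σ x = k := by
  rw [qProp_iff_sameCycle]
  refine ⟨fun ⟨hx, hy⟩ => ⟨fun y => ?_, hx⟩, fun ⟨hy, hx⟩ => ⟨hx, fun y _ => hy y⟩⟩
  by_cases hxy : σ.SameCycle x y
  · rwa [hxy.minimalPeriod_eq, hx]
  · exact hy y hxy

lemma qProp_conj_iff [Finite α] (g σ : Perm α) (x : α) :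
    QProp r k (g x) (g * σ * g⁻¹) ↔ QProp r k x σ := by
  rw [qProp_iff_sameCycle, qProp_iff_sameCycle, minimalPeriod_conj]
  refine and_congr_right fun _ => g.forall_congr_right.symm.trans ?_
  simp only [sameCycle_conj, minimalPeriod_conj, Perm.coe_inv, symm_apply_apply]

lemma card_qProp_eq [Finite α] (x y : α) :
    Nat.card {σ : Perm α // QProp r k x σ} = Nat.card {σ : Perm α // QProp r k y σ} := by
  classical
  refine Nat.card_congr ((MulAut.conj (swap x y)).toEquiv.subtypeEquiv fun σ => ?_)
  simp [← qProp_conj_iff (swap x y) σ x]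

variable {n : ℕ} (τ : Perm (Fin n))

lemma qProp_decomposeFin_symm_succ_iff {q : Fin n} :
    QProp r (k + 1) 0 (decomposeFin.symm (q.succ, τ)) ↔ QProp r k q τ := by
  rw [qProp_iff_sameCycle, qProp_iff_sameCycle, minimalPeriod_decomposeFin_symm_zero,
    Nat.add_right_cancel_iff, Fin.forall_fin_succ]
  refine and_congr_right fun _ => ?_
  simp only [SameCycle.refl, not_true_eq_false, false_imp_iff, true_and,
    sameCycle_decomposeFin_symm_zero_succ_iff]
  refine forall_congr' fun y => imp_congr_right fun hqy => ?_
  rw [minimalPeriod_decomposeFin_symm_succ τ fun i hi =>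
    hqy (SameCycle.symm ⟨i, by simpa using Fin.succ_injective _ hi⟩)]

lemma qProp_decomposeFin_symm_zero_iff :
    QProp r k 0 (decomposeFin.symm (0, τ)) ↔ k = 1 ∧ ∀ y, ¬ r ∣ minimalPeriod τ y := by
  have hfix (i : ℕ) : (decomposeFin.symm (0, τ) ^ i) 0 = 0 := by
    rw [← iterate_eq_pow]
    exact iterate_fixed (decomposeFin_symm_apply_zero 0 τ) i
  rw [QProp, minimalPeriod_eq_one_iff_isFixedPt.2 (decomposeFin_symm_apply_zero 0 τ), eq_comm,
    Fin.forall_fin_succ]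
  refine and_congr_right fun _ => ?_
  simp only [hfix, ne_eq, not_true_eq_false, forall_const, false_imp_iff, true_and,
    (Fin.succ_ne_zero _).symm, not_false_eq_true,
    minimalPeriod_decomposeFin_symm_succ τ fun _ => Fin.succ_ne_zero _]

end QProp

section Counting

variable (r : ℕ)

/-- `qCount r k t = |Q_{r,k}(t + 1)|`. -/
noncomputable def qCount (k t : ℕ) : ℕ :=
  Nat.card {σ : Perm (Fin (t + 1)) // QProp r k 0 σ}

noncomputable def dCount (t : ℕ) : ℕ :=
  Nat.card {σ : Perm (Fin t) // ∀ y, ¬ r ∣ minimalPeriod σ y}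

variable {r} {k t : ℕ}

lemma card_qProp_fin_succ (q : Fin (t + 1)) :
    Nat.card {σ : Perm (Fin (t + 1)) // QProp r k q σ} = qCount r k t :=
  card_qProp_eq q 0

lemma card_subtype_perm_fin_succ (P : Perm (Fin (t + 1)) → Prop) :
    Nat.card {σ // P σ} = ∑ p, Nat.card {τ : Perm (Fin t) // P (decomposeFin.symm (p, τ))} := by
  rw [← Nat.card_sigma]
  exact Nat.card_congr ((decomposeFin.subtypeEquiv fun σ => by rw [symm_apply_apply]).trans
    (subtypeProdEquivSigmaSubtype fun p τ => P (decomposeFin.symm (p, τ))))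

lemma qCount_succ :
    qCount r (k + 1) t = (if k = 0 then dCount r t else 0) +
      ∑ q : Fin t, Nat.card {τ : Perm (Fin t) // QProp r k q τ} := by
  rw [qCount, card_subtype_perm_fin_succ, Fin.sum_univ_succ]
  simp only [qProp_decomposeFin_symm_succ_iff]
  congr 1
  split_ifs with hk
  · exact Nat.card_congr (subtypeEquivRight fun τ => by
      rw [qProp_decomposeFin_symm_zero_iff, hk]
      exact and_iff_right rfl)
  · have := Subtype.isEmpty_of_false fun (τ : Perm (Fin t)) h =>
      hk (by simpa using ((qProp_decomposeFin_symm_zero_iff (r := r) (k := k + 1) τ).1 h).1)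
    exact Nat.card_of_isEmpty

lemma qCount_one : qCount r 1 t = dCount r t := by
  rw [qCount_succ, if_pos rfl, add_eq_left]
  refine sum_eq_zero fun q _ => ?_
  have := Subtype.isEmpty_of_false fun (τ : Perm (Fin t)) (h : QProp r 0 q τ) =>
    (minimalPeriod_pos τ q).ne' h.1
  exact Nat.card_of_isEmpty

lemma qCount_succ_succ (hk : k ≠ 0) : qCount r (k + 1) (t + 1) = (t + 1) * qCount r k t := by
  simp [qCount_succ, hk, card_qProp_fin_succ]

lemma dCount_succ : dCount r (t + 1) = ∑ k ∈ Icc 1 (t + 1) with ¬ r ∣ k, qCount r k t := by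
  classical
  have hmaps : Set.MapsTo (fun σ : Perm (Fin (t + 1)) => minimalPeriod σ 0)
      ({σ : Perm (Fin (t + 1)) | ∀ y, ¬ r ∣ minimalPeriod σ y} : Finset _)
      ({k ∈ Icc 1 (t + 1) | ¬ r ∣ k} : Finset ℕ) := by
    intro σ hσ
    have hle := minimalPeriod_le_card (f := σ) (x := 0)
    rw [Fintype.card_fin] at hle
    rw [mem_coe, mem_filter] at hσ ⊢
    exact ⟨mem_Icc.2 ⟨minimalPeriod_pos σ 0, hle⟩, hσ.2 0⟩
  rw [dCount, Nat.card_eq_fintype_card, Fintype.card_subtype, card_eq_sum_card_fiberwise hmaps]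
  refine sum_congr rfl fun k hk => ?_
  rw [qCount, Nat.card_eq_fintype_card, Fintype.card_subtype, filter_filter]
  exact congrArg card (filter_congr fun σ _ => (qProp_iff_of_not_dvd (mem_filter.1 hk).2).symm)

lemma qCount_mul_factorial (hk : 1 ≤ k) (hkt : k ≤ t + 1) :
    qCount r k t * (t + 1 - k)! = t ! * dCount r (t + 1 - k) := by
  induction k, hk using Nat.le_induction generalizing t with
  | base => rw [qCount_one, Nat.add_sub_cancel, Nat.mul_comm]
  | succ k hk ih =>
    obtain ⟨t, rfl⟩ : ∃ s, t = s + 1 := ⟨t - 1, by omega⟩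
    rw [qCount_succ_succ (by omega), show t + 1 + 1 - (k + 1) = t + 1 - k by omega,
      Nat.mul_assoc, ih (by omega), Nat.factorial_succ, Nat.mul_assoc]

end Counting

section Sums

variable {M : Type*} [AddCommMonoid M] {r : ℕ}

lemma sum_range_comp_div (f : ℕ → M) (hr : 0 < r) (N : ℕ) :
    ∑ i ∈ range N, f (i / r) = r • ∑ i ∈ range (N / r), f i + (N % r) • f (N / r) := by
  have block (q s : ℕ) (hs : s ≤ r) : ∑ i ∈ range s, f ((r * q + i) / r) = s • f q := by
    rw [← card_range s, ← sum_const, card_range]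
    refine sum_congr rfl fun i hi => ?_
    rw [Nat.mul_add_div hr, Nat.div_eq_of_lt (by simp at hi; omega), add_zero]
  have whole (q : ℕ) : ∑ i ∈ range (r * q), f (i / r) = r • ∑ i ∈ range q, f i := by
    induction q with
    | zero => simp
    | succ q ih => rw [Nat.mul_succ, sum_range_add, ih, block q r le_rfl, sum_range_succ, smul_add]
  conv_lhs => rw [← Nat.div_add_mod N r]
  rw [sum_range_add, whole, block _ _ (Nat.mod_lt N hr).le]

lemma sum_filter_dvd_Icc (f : ℕ → M) (hr : 0 < r) (N : ℕ) :
    ∑ k ∈ Icc 1 N with r ∣ k, f k = ∑ j ∈ Icc 1 (N / r), f (r * j) := by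
  refine sum_nbij' (· / r) (r * ·) (fun k hk => ?_) (fun j hj => ?_)
    (fun k hk => Nat.mul_div_cancel' (mem_filter.1 hk).2) (fun j _ => Nat.mul_div_cancel_left j hr)
    (fun k hk => by rw [Nat.mul_div_cancel' (mem_filter.1 hk).2])
  · obtain ⟨⟨h1, hN⟩, hdvd⟩ := (mem_filter.1 hk).imp_left mem_Icc.1
    exact mem_Icc.2 ⟨(Nat.one_le_div_iff hr).2 (Nat.le_of_dvd h1 hdvd), Nat.div_le_div_right hN⟩
  · obtain ⟨h1, hN⟩ := mem_Icc.1 hj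
    refine mem_filter.2 ⟨mem_Icc.2 ⟨Nat.mul_pos hr h1, ?_⟩, dvd_mul_right r j⟩
    rwa [Nat.mul_comm, ← Nat.le_div_iff_mul_le hr]

end Sums

section CycleWeight

variable {r : ℕ}

noncomputable def cycleWeight (r m : ℕ) : ℚ :=
  (∏ j ∈ Icc 1 m, (j * r - 1) : ℕ) / (r ^ m * m ! : ℕ)

lemma cycleWeight_zero (r : ℕ) : cycleWeight r 0 = 1 := by
  simp [cycleWeight]

lemma cycleWeight_mul (hr : 0 < r) (m : ℕ) :
    cycleWeight r m * (r ^ m * m ! : ℕ) = (∏ j ∈ Icc 1 m, (j * r - 1) : ℕ) :=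
  div_mul_cancel₀ _ (by positivity)

lemma cycleWeight_succ_mul (hr : 0 < r) (m : ℕ) :
    cycleWeight r (m + 1) * ((m + 1) * r) = cycleWeight r m * ((m + 1) * r - 1) := by
  have hsub : (((m + 1) * r - 1 : ℕ) : ℚ) = (m + 1) * r - 1 := by
    rw [Nat.cast_sub (Nat.one_le_iff_ne_zero.2 (by positivity))]
    push_cast
    ring
  simp only [cycleWeight, prod_Icc_succ_top (Nat.le_add_left 1 m), Nat.cast_mul, hsub,
    pow_succ, Nat.factorial_succ]
  field_simp
  push_cast
  ring

lemma sub_one_mul_sum_range_cycleWeight (hr : 0 < r) (m : ℕ) :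
    (r - 1) * ∑ i ∈ range m, cycleWeight r i = m * r * cycleWeight r m := by
  induction m with
  | zero => simp
  | succ m ih =>
    rw [sum_range_succ, mul_add, ih, Nat.cast_succ]
    linear_combination -cycleWeight_succ_mul hr m

lemma sum_filter_not_dvd_cycleWeight (hr : 0 < r) (N : ℕ) :
    ∑ k ∈ Icc 1 N with ¬ r ∣ k, cycleWeight r ((N - k) / r) = N * cycleWeight r (N / r) := by
  have hall : ∑ k ∈ Icc 1 N, cycleWeight r ((N - k) / r) =
      r * ∑ i ∈ range (N / r), cycleWeight r i + (N % r : ℕ) * cycleWeight r (N / r) := by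
    rw [← Ico_add_one_right_eq_Icc, sum_Ico_reflect (fun i => cycleWeight r (i / r)) 1 le_rfl,
      Nat.add_sub_cancel, Nat.sub_self, ← range_eq_Ico, sum_range_comp_div _ hr, nsmul_eq_mul,
      nsmul_eq_mul]
  have hdvd : ∑ k ∈ Icc 1 N with r ∣ k, cycleWeight r ((N - k) / r) =
      ∑ i ∈ range (N / r), cycleWeight r i := by
    simp only [sum_filter_dvd_Icc _ hr, Nat.sub_mul_div]
    rw [← Ico_add_one_right_eq_Icc, sum_Ico_reflect _ 1 le_rfl, Nat.add_sub_cancel,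
      Nat.sub_self, ← range_eq_Ico]
  have hsplit := sum_filter_add_sum_filter_not (Icc 1 N) (r ∣ ·)
    fun k => cycleWeight r ((N - k) / r)
  rw [hall, hdvd] at hsplit
  have hN : (N : ℚ) = r * (N / r : ℕ) + (N % r : ℕ) := by
    exact_mod_cast (Nat.div_add_mod N r).symm
  rw [hN]
  linear_combination hsplit + sub_one_mul_sum_range_cycleWeight hr (N / r)

variable {k t : ℕ}

lemma cast_qCount_eq (hk : 1 ≤ k) (hkt : k ≤ t + 1)
    (hD : (dCount r (t + 1 - k) : ℚ) = (t + 1 - k)! * cycleWeight r ((t + 1 - k) / r)) :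
    (qCount r k t : ℚ) = t ! * cycleWeight r ((t + 1 - k) / r) := by
  have h := congrArg (Nat.cast : ℕ → ℚ) (qCount_mul_factorial (r := r) hk hkt)
  push_cast at h
  rw [hD, mul_left_comm, mul_comm _ ((t + 1 - k)! : ℚ)] at h
  exact mul_left_cancel₀ (Nat.cast_ne_zero.2 (Nat.factorial_ne_zero _)) h

lemma cast_dCount_eq (hr : 0 < r) (t : ℕ) : (dCount r t : ℚ) = t ! * cycleWeight r (t / r) := by
  induction t using Nat.strong_induction_on with
  | _ t ih =>
  cases t with
  | zero => simp [dCount, cycleWeight_zero]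
  | succ t =>
    have hq : ∀ k ∈ {k ∈ Icc 1 (t + 1) | ¬ r ∣ k},
        (qCount r k t : ℚ) = t ! * cycleWeight r ((t + 1 - k) / r) := fun k hk => by
      obtain ⟨hk1, hkt⟩ := mem_Icc.1 (mem_filter.1 hk).1
      exact cast_qCount_eq hk1 hkt (ih _ (by omega))
    rw [dCount_succ, Nat.cast_sum, sum_congr rfl hq, ← mul_sum, sum_filter_not_dvd_cycleWeight hr,
      Nat.factorial_succ]
    push_cast
    ring

end CycleWeight

/-- if `n - k = mr + d` with `0 < d < r`, then
`|Q_{r,k}(n)| · r^m · m! = (n-1)! · (r-1)(2r-1)⋯(mr-1)`. -/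
theorem stmt5 (n r k m d : ℕ) (hk : 1 ≤ k)
    (h : n - k = m * r + d) (hd0 : 0 < d) (hdr : d < r) :
    Nat.card {σ : Equiv.Perm (Fin n) // QProp r k
        (⟨0, by omega⟩ : Fin n) σ} * (r ^ m * Nat.factorial m) =
      Nat.factorial (n - 1) * ∏ j ∈ Finset.Icc 1 m, (j * r - 1) := by
  have hr : 0 < r := hd0.trans hdr
  obtain ⟨t, rfl⟩ : ∃ t, n = t + 1 := ⟨n - 1, by omega⟩
  have hm : (t + 1 - k) / r = m := by
    rw [h, Nat.add_comm, Nat.add_mul_div_right _ _ hr, Nat.div_eq_of_lt hdr, zero_add]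
  have hq := cast_qCount_eq (t := t) hk (by omega) (cast_dCount_eq hr _)
  rw [hm] at hq
  have key : (qCount r k t : ℚ) * (r ^ m * m ! : ℕ) = (t ! * ∏ j ∈ Icc 1 m, (j * r - 1) : ℕ) := by
    rw [hq, mul_assoc, cycleWeight_mul hr, Nat.cast_mul]
  rw [Nat.add_sub_cancel]
  exact_mod_cast key
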